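/- arXiv:2412.12319 — 4 statements merged into one kernel-verified Lean document; each statement's English description precedes it below -/
import Mathlib

section
/- If s is a complex number with positive imaginary part, then the digamma function ψ(s) = Γ'(s)/Γ(s) also has positive imaginary part; consequently, for any real number a, every complex solution s of ψ(s) = a with s not equal to a non-positive integer is real. -/
/-!
Writing `1 / GammaSeq s n = s e^{(H_n - log n) s} ∏_{j<n} (1 + s/(j+1)) e^{-s/(j+1)}` exhibits the
Gauss sequence as a Weierstrass product, so it converges to `Γ` locally uniformly away from the
poles, and hence its logarithmic derivative `log n - ∑_{j ≤ n} 1/(s+j)` converges to `ψ(s)`.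
The term `-1/(s+j)` has imaginary part `Im s / |s+j|²`, so `Im ψ(s) ≥ Im s / |s|² > 0` in the
upper half-plane. As `ψ(conj s) = conj ψ(s)`, `ψ` has negative imaginary part in the lower
half-plane, so `ψ(s)` can only be real when `s` is.
-/

/-- The digamma function on the complex plane: `ψ(s) = Γ'(s)/Γ(s)`. -/
noncomputable def cdigamma (s : ℂ) : ℂ := deriv Complex.Gamma s / Complex.Gamma s

open Complex Filter Topology Finset
open scoped Nat ComplexConjugate

lemma tendstoLocallyUniformly_const_seq {ι α β : Type*} [TopologicalSpace α]
    [UniformSpace β] (p : Filter ι) (f : α → β) : TendstoLocallyUniformly (fun _ => f) f p :=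
  TendstoUniformly.tendstoLocallyUniformly fun _ hu => .of_forall fun _ _ => refl_mem_uniformity hu

namespace Complex

lemma norm_one_add_mul_exp_neg_sub_one_le {z : ℂ} (hz : ‖z‖ ≤ 1) :
    ‖(1 + z) * exp (-z) - 1‖ ≤ 3 * ‖z‖ ^ 2 := by
  have hfactor : (1 + z) * exp (-z) - 1 = -(exp (-z) * (exp z - 1 - z)) := by
    have := exp_add (-z) z
    rw [neg_add_cancel, exp_zero] at this
    linear_combination -this
  have hexp : ‖exp (-z)‖ ≤ 3 := calc
    ‖exp (-z)‖ ≤ Real.exp ‖-z‖ := norm_exp_le_exp_norm _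
    _ ≤ Real.exp 1 := Real.exp_le_exp.mpr (by rwa [norm_neg])
    _ ≤ 3 := (Real.exp_one_lt_d9.trans (by norm_num)).le
  rw [hfactor, norm_neg, norm_mul]
  exact mul_le_mul hexp (norm_exp_sub_one_sub_id_le hz) (norm_nonneg _) (by norm_num)

noncomputable def weierstrassFactor (j : ℕ) (s : ℂ) : ℂ :=
  (1 + s / (j + 1)) * exp (-(s / (j + 1)))

lemma hasProdUniformlyOn_weierstrassFactor {K : Set ℂ} (hK : IsCompact K) :
    HasProdUniformlyOn weierstrassFactor (fun s => ∏' j, weierstrassFactor j s) K := by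
  obtain ⟨R, hR⟩ := hK.isBounded.exists_norm_le
  have hsum : Summable fun j : ℕ => 3 * R ^ 2 * (1 / ((j + 1 : ℕ) : ℝ) ^ 2) :=
    ((summable_nat_add_iff 1).mpr (Real.summable_one_div_nat_pow.mpr one_lt_two)).mul_left _
  have hbound : ∀ᶠ j : ℕ in atTop, ∀ s ∈ K,
      ‖weierstrassFactor j s - 1‖ ≤ 3 * R ^ 2 * (1 / ((j + 1 : ℕ) : ℝ) ^ 2) := by
    filter_upwards [eventually_ge_atTop ⌈R⌉₊] with j hRj s hs
    have hj : (0 : ℝ) < j + 1 := by positivity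
    have hnorm : ‖s / (j + 1)‖ = ‖s‖ / (j + 1) := by
      rw [norm_div, ← Nat.cast_add_one, norm_natCast, Nat.cast_add_one]
    have hsR : ‖s / (j + 1)‖ ≤ R / (j + 1) := by
      rw [hnorm]; gcongr; exact hR s hs
    have hR1 : R / (j + 1) ≤ 1 := by
      rw [div_le_one hj]; linarith [Nat.le_ceil R, (Nat.cast_le (α := ℝ)).mpr hRj]
    calc ‖weierstrassFactor j s - 1‖ ≤ 3 * ‖s / (j + 1)‖ ^ 2 :=
          norm_one_add_mul_exp_neg_sub_one_le (hsR.trans hR1)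
      _ ≤ 3 * (R / (j + 1)) ^ 2 := by gcongr
      _ = _ := by push_cast; field_simp
  have hcont : ∀ j, ContinuousOn (fun s => weierstrassFactor j s - 1) K := fun j => by
    unfold weierstrassFactor; fun_prop
  simpa using hsum.hasProdUniformlyOn_nat_one_add hK hbound hcont

lemma tendstoLocallyUniformly_prod_weierstrassFactor :
    TendstoLocallyUniformly (fun n s => ∏ j ∈ range n, weierstrassFactor j s)
      (fun s => ∏' j, weierstrassFactor j s) atTop :=
  (hasProdLocallyUniformly_of_forall_compact fun _ hK =>
    hasProdUniformlyOn_weierstrassFactor hK).tendstoLocallyUniformly_finsetRange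

lemma tendstoLocallyUniformly_cexp_mul {ι : Type*} {p : Filter ι} {c : ι → ℂ} {a : ℂ}
    (hc : Tendsto c p (𝓝 a)) :
    TendstoLocallyUniformly (fun n s => exp (c n * s)) (fun s => exp (a * s)) p := by
  have hlin := hc.tendstoUniformly_const.tendstoLocallyUniformly.fun_mul₀
    (tendstoLocallyUniformly_const_seq p id) continuous_const continuous_id
  rw [tendstoLocallyUniformly_iff_forall_isCompact] at hlin ⊢
  exact fun K hK => (hlin K hK).comp_cexp (hK.image (by fun_prop)).bddAbove

lemma GammaSeq_eq_exp_mul_div (s : ℂ) {n : ℕ} (hn : n ≠ 0) :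
    GammaSeq s n = exp (Real.log n * s) * n ! / ∏ j ∈ range (n + 1), (s + j) := by
  rw [GammaSeq, cpow_def_of_ne_zero (Nat.cast_ne_zero.mpr hn), ofReal_log n.cast_nonneg,
    ofReal_natCast]

lemma inv_GammaSeq_eq_mul_prod_weierstrassFactor (s : ℂ) {n : ℕ} (hn : n ≠ 0) :
    (GammaSeq s n)⁻¹ =
      s * exp ((harmonic n - Real.log n : ℝ) * s) * ∏ j ∈ range n, weierstrassFactor j s := by
  have hfactorial : (n ! : ℂ) = ∏ j ∈ range n, ((j : ℂ) + 1) := by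
    rw [← prod_range_add_one_eq_factorial]; push_cast; rfl
  have hlinear : ∏ j ∈ range n, (s + (j + 1 : ℕ)) =
      (∏ j ∈ range n, (1 + s / (j + 1))) * ∏ j ∈ range n, ((j : ℂ) + 1) := by
    rw [← prod_mul_distrib]
    refine prod_congr rfl fun j _ => ?_
    have : (j : ℂ) + 1 ≠ 0 := Nat.cast_add_one_ne_zero j
    push_cast
    field_simp
    ring
  have hharmonic : ∑ j ∈ range n, -(s / (j + 1)) = -(harmonic n * s) := by
    simp only [harmonic, Rat.cast_sum, Rat.cast_inv, Rat.cast_natCast, sum_mul, ← sum_neg_distrib]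
    refine sum_congr rfl fun j _ => ?_
    push_cast
    ring
  rw [GammaSeq_eq_exp_mul_div s hn, inv_div, prod_range_succ', hlinear, ← hfactorial]
  simp only [weierstrassFactor, prod_mul_distrib, ← exp_sum, hharmonic]
  rw [Nat.cast_zero, add_zero, ofReal_sub, ofReal_ratCast, sub_mul, exp_sub, exp_neg]
  have : (n ! : ℂ) ≠ 0 := Nat.cast_ne_zero.mpr n.factorial_ne_zero
  field_simp

theorem tendstoLocallyUniformlyOn_GammaSeq {U : Set ℂ} (hU : ∀ s ∈ U, ∀ m : ℕ, s ≠ -m) :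
    TendstoLocallyUniformlyOn (fun n s => GammaSeq s n) Gamma atTop U := by
  have hc : Tendsto (fun n : ℕ => ((harmonic n - Real.log n : ℝ) : ℂ)) atTop
      (𝓝 (Real.eulerMascheroniConstant : ℂ)) :=
    Real.tendsto_harmonic_sub_log.ofReal
  have hprod := tendstoLocallyUniformly_prod_weierstrassFactor
  have hW := ((tendstoLocallyUniformly_const_seq atTop id).fun_mul₀
    (tendstoLocallyUniformly_cexp_mul hc) continuous_id (by fun_prop)).fun_mul₀ hprod
    (by fun_prop) (hprod.continuous (.of_forall fun n => by unfold weierstrassFactor; fun_prop))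
  have hinv := hW.tendstoLocallyUniformlyOn (s := U) |>.congr_inseparable
    (G := fun n s => (GammaSeq s n)⁻¹) <| (eventually_ne_atTop 0).mono fun n hn s _ =>
      .of_eq (inv_GammaSeq_eq_mul_prod_weierstrassFactor s hn).symm
  have hlim : U.EqOn _ (fun s => (Gamma s)⁻¹) := fun s hs =>
    tendsto_nhds_unique (hinv.tendsto_at hs)
      ((GammaSeq_tendsto_Gamma s).inv₀ (Gamma_ne_zero (hU s hs)))
  simpa only [inv_inv] using (hinv.congr_right hlim).fun_inv₀
    differentiable_one_div_Gamma.continuous.continuousOn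
    fun s hs => inv_ne_zero (Gamma_ne_zero (hU s hs))

lemma logDeriv_GammaSeq {s : ℂ} (hs : ∀ m : ℕ, s ≠ -m) {n : ℕ} (hn : n ≠ 0) :
    logDeriv (GammaSeq · n) s = Real.log n - ∑ j ∈ range (n + 1), (s + j)⁻¹ := by
  have hlinear : ∀ j ∈ range (n + 1), s + j ≠ 0 := fun j _ h =>
    hs j (eq_neg_of_add_eq_zero_left h)
  have hfactorial : (n ! : ℂ) ≠ 0 := Nat.cast_ne_zero.mpr n.factorial_ne_zero
  rw [funext fun z => GammaSeq_eq_exp_mul_div z hn,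
    logDeriv_div (f := fun z => exp (Real.log n * z) * n !)
      (g := fun z => ∏ j ∈ range (n + 1), (z + j)) s (mul_ne_zero (exp_ne_zero _) hfactorial)
      (prod_ne_zero_iff.mpr hlinear) (by fun_prop) (by fun_prop),
    logDeriv_mul_const (f := fun z => exp (Real.log n * z)) s _ hfactorial,
    logDeriv_prod hlinear fun j _ => by fun_prop]
  congr 1
  · rw [show (fun z : ℂ => exp (Real.log n * z)) = exp ∘ (fun z => Real.log n * z) from rfl,
      logDeriv_comp (by fun_prop) (by fun_prop), logDeriv_exp, deriv_const_mul_field', deriv_id'']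
    simp
  · refine sum_congr rfl fun j _ => ?_
    rw [logDeriv_apply, deriv_add_const, deriv_id'', one_div]

lemma im_div_normSq_le_im_logDeriv_GammaSeq {s : ℂ} (hs : 0 < s.im) {n : ℕ} (hn : n ≠ 0) :
    s.im / normSq s ≤ (logDeriv (GammaSeq · n) s).im := by
  have hterm : ∀ j : ℕ, -((s + j)⁻¹).im = s.im / normSq (s + j) := fun j => by
    rw [inv_im, add_im, natCast_im, add_zero, neg_div, neg_neg]
  rw [logDeriv_GammaSeq (fun m h => by simp [h] at hs) hn, sub_im, ofReal_im, zero_sub, im_sum,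
    ← sum_neg_distrib]
  simp only [hterm]
  refine le_of_eq_of_le (by simp) (single_le_sum (fun j _ => ?_) (mem_range.mpr n.succ_pos))
  exact div_nonneg hs.le (normSq_nonneg _)

theorem im_div_normSq_le_im_digamma {s : ℂ} (hs : 0 < s.im) :
    s.im / normSq s ≤ (digamma s).im := by
  set U := {z : ℂ | 0 < z.im}
  have hpoles : ∀ z ∈ U, ∀ m : ℕ, z ≠ -m := fun z hz m h => by simp [U, h] at hz
  have hdiff : ∀ n ≠ 0, DifferentiableOn ℂ (GammaSeq · n) U := fun n hn z hz => by
    have hlinear : ∀ j ∈ range (n + 1), z + j ≠ 0 := fun j _ h =>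
      hpoles z hz j (eq_neg_of_add_eq_zero_left h)
    rw [funext fun w => GammaSeq_eq_exp_mul_div w hn]
    exact DifferentiableAt.differentiableWithinAt
      (by fun_prop (disch := exact prod_ne_zero_iff.mpr hlinear))
  have hlim := logDeriv_tendsto (isOpen_lt continuous_const continuous_im) hs
    (tendstoLocallyUniformlyOn_GammaSeq hpoles) ((eventually_ne_atTop 0).mono hdiff)
    (Gamma_ne_zero (hpoles s hs))
  exact ge_of_tendsto ((continuous_im.tendsto _).comp hlim)
    ((eventually_ne_atTop 0).mono fun n hn => im_div_normSq_le_im_logDeriv_GammaSeq hs hn)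

theorem im_digamma_pos {s : ℂ} (hs : 0 < s.im) : 0 < (digamma s).im :=
  (div_pos hs (normSq_pos.mpr fun h => by simp [h] at hs)).trans_le
    (im_div_normSq_le_im_digamma hs)

theorem digamma_conj (s : ℂ) : digamma (conj s) = conj (digamma s) := by
  have hGamma : (conj ∘ Gamma ∘ conj : ℂ → ℂ) = Gamma := funext fun z => by simp [Gamma_conj]
  have hderiv : deriv Gamma (conj s) = conj (deriv Gamma s) := by
    conv_lhs => rw [← hGamma, deriv_conj_conj]
    simp
  rw [digamma_def, logDeriv_apply, logDeriv_apply, hderiv, Gamma_conj, map_div₀]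

theorem im_eq_zero_of_digamma_eq_ofReal {s : ℂ} {a : ℝ} (h : digamma s = a) : s.im = 0 := by
  rcases lt_trichotomy s.im 0 with hneg | hzero | hpos
  · have := im_digamma_pos (s := conj s) (by simpa using hneg)
    simp [digamma_conj, h] at this
  · exact hzero
  · have := im_digamma_pos hpos
    simp [h] at this

end Complex

/--
If `s` is a complex number with positive imaginary part, then the digamma function
`ψ(s) = Γ'(s)/Γ(s)` also has positive imaginary part; consequently, for any real number `a`,
every complex solution `s` of `ψ(s) = a` with `s` not equal to a non-positive integer is real.
-/
theorem stmt0 :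
    (∀ s : ℂ, 0 < s.im → 0 < (cdigamma s).im) ∧
    (∀ (a : ℝ) (s : ℂ), (∀ n : ℕ, s ≠ -(n : ℂ)) → cdigamma s = (a : ℂ) → s.im = 0) :=
  ⟨fun _ hs => Complex.im_digamma_pos hs,
    fun _ _ _ h => Complex.im_eq_zero_of_digamma_eq_ofReal h⟩
end

section
/- For every integer n ≥ 1 and every complex number s with Re s > -1 and s ≠ 0, one has ∫₀¹ x^{s-1}(1 - (1-x)^{n-1}) dx = 1/s - Γ(s)Γ(n)/Γ(n+s), where Γ is the complex Gamma function. -/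
/-!
Since `1 - (1 - x) ^ m = x * ∑ k < m, (1 - x) ^ k`, the integral is a sum of Beta integrals
`B(s + 1, k + 1) = Γ(s + 1) Γ(k + 1) / Γ(s + k + 2)`. By `Γ(z + 1) = z Γ(z)` each of these equals
`f k - f (k + 1)` for `f k = Γ(s) Γ(k + 1) / Γ(k + 1 + s)`, so the sum telescopes to
`f 0 - f m = 1 / s - f m`.
-/

open Finset intervalIntegral

namespace Complex

lemma intervalIntegrable_cpow_mul_one_sub_pow {a : ℂ} (ha : 0 < a.re) (k : ℕ) :
    IntervalIntegrable (fun x : ℝ => (x : ℂ) ^ (a - 1) * (1 - (x : ℂ)) ^ k)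
      MeasureTheory.volume 0 1 := by
  simpa [cpow_natCast] using betaIntegral_convergent (v := k + 1) ha (by simp only [add_re, natCast_re, one_re]; positivity)

lemma integral_cpow_mul_one_sub_pow {a : ℂ} (ha : 0 < a.re) (k : ℕ) :
    ∫ x in (0 : ℝ)..1, (x : ℂ) ^ (a - 1) * (1 - (x : ℂ)) ^ k =
      Gamma a * Gamma (k + 1) / Gamma (a + k + 1) := by
  have hk : 0 < ((k : ℂ) + 1).re := by simp only [add_re, natCast_re, one_re]; positivity
  rw [eq_div_iff (Gamma_ne_zero_of_re_pos (by simp only [add_re, natCast_re, one_re]; positivity)),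
    Gamma_mul_Gamma_eq_betaIntegral ha hk, betaIntegral, ← add_assoc, mul_comm]
  simp [cpow_natCast]

lemma sum_range_Gamma_mul_Gamma_div {s : ℂ} (hs : ∀ j : ℕ, s ≠ -j) (m : ℕ) :
    ∑ k ∈ range m, Gamma (s + 1) * Gamma (k + 1) / Gamma (s + 1 + k + 1) =
      1 / s - Gamma s * Gamma (m + 1) / Gamma (m + 1 + s) := by
  set f : ℕ → ℂ := fun k => Gamma s * Gamma (k + 1) / Gamma (k + 1 + s)
  have hs0 : s ≠ 0 := by simpa using hs 0
  have hterm (k : ℕ) : Gamma (s + 1) * Gamma (k + 1) / Gamma (s + 1 + k + 1) = f k - f (k + 1) := by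
    have hk : (k : ℂ) + 1 + s ≠ 0 := fun h => hs (k + 1) (by push_cast; linear_combination h)
    have hG : Gamma ((k : ℂ) + 1 + s) ≠ 0 := Gamma_ne_zero fun j h =>
      hs (j + k + 1) (by push_cast; linear_combination h)
    simp only [f, Nat.cast_add_one]
    rw [Gamma_add_one _ hs0, show s + 1 + k + 1 = (k + 1 + s) + 1 by ring,
      show (k : ℂ) + 1 + 1 + s = (k + 1 + s) + 1 by ring, Gamma_add_one _ hk,
      Gamma_add_one _ (Nat.cast_add_one_ne_zero k)]
    field_simp
    ring
  have hGs : Gamma s ≠ 0 := Gamma_ne_zero hs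
  rw [sum_congr rfl fun k _ => hterm k, sum_range_sub']
  congr 1
  simp only [f, Nat.cast_zero, zero_add, Gamma_one, mul_one, add_comm (1 : ℂ) s,
    Gamma_add_one _ hs0, div_mul_cancel_right₀ hGs, one_div]

theorem integral_cpow_mul_one_sub_one_sub_pow {s : ℂ} (hs : -1 < s.re) (hs0 : s ≠ 0) (m : ℕ) :
    ∫ x in (0 : ℝ)..1, (x : ℂ) ^ (s - 1) * (1 - (1 - (x : ℂ)) ^ m) =
      1 / s - Gamma s * Gamma (m + 1) / Gamma (m + 1 + s) := by
  have ha : 0 < (s + 1).re := by simp only [add_re, one_re]; linarith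
  have hsplit : ∀ x ∈ Set.uIoc (0 : ℝ) 1, (x : ℂ) ^ (s - 1) * (1 - (1 - (x : ℂ)) ^ m) =
      ∑ k ∈ range m, (x : ℂ) ^ (s + 1 - 1) * (1 - (x : ℂ)) ^ k := by
    intro x hx
    rw [Set.uIoc_of_le zero_le_one] at hx
    have hx0 : (x : ℂ) ≠ 0 := ofReal_ne_zero.mpr hx.1.ne'
    rw [← mul_sum, show s + 1 - 1 = s - 1 + 1 by ring, cpow_add _ _ hx0, cpow_one, mul_assoc,
      ← mul_neg_geom_sum, sub_sub_cancel]
  have hs_ne : ∀ j : ℕ, s ≠ -j := by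
    rintro (_ | j) rfl
    · simp at hs0
    · simp only [Nat.cast_add_one, neg_re, add_re, natCast_re, one_re] at hs
      linarith [j.cast_nonneg (α := ℝ)]
  rw [integral_congr_ae (MeasureTheory.ae_of_all _ hsplit),
    integral_finsetSum fun k _ => intervalIntegrable_cpow_mul_one_sub_pow ha k]
  simp_rw [integral_cpow_mul_one_sub_pow ha]
  exact sum_range_Gamma_mul_Gamma_div hs_ne m

end Complex

/--
For every integer `n ≥ 1` and every complex number `s` with `Re s > -1` and `s ≠ 0`, one has
`∫₀¹ x^(s-1)(1 - (1-x)^(n-1)) dx = 1/s - Γ(s)Γ(n)/Γ(n+s)`, where `Γ` is the complex Gamma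
function.
-/
theorem stmt2 (n : ℕ) (hn : 1 ≤ n) (s : ℂ) (hs : -1 < s.re) (hs0 : s ≠ 0) :
    ∫ x in (0:ℝ)..1, (x : ℂ) ^ (s - 1) * (1 - (1 - (x : ℂ)) ^ (n - 1)) =
      1 / s - Complex.Gamma s * Complex.Gamma (n : ℂ) / Complex.Gamma ((n : ℂ) + s) := by
  obtain ⟨m, rfl⟩ := Nat.exists_eq_add_of_le' hn
  simpa using Complex.integral_cpow_mul_one_sub_one_sub_pow hs hs0 m
end

section
/- For every integer n ≥ 2 and every complex number s = σ + iτ with σ > -1 and s ≠ 0, one has |Γ(s)Γ(n)/Γ(s+n)| ≤ Γ(σ+2)Γ(n)/(|s(s+1)| · Γ(σ+n)), where Γ denotes the Gamma function (complex on the left, real and positive on the right). -/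
/-!
Since `Γ(s) = Γ(s+2)/(s(s+1))`, the bound reduces, with `z = s + 2` and `m = n - 2`, to
`‖Γ(z)/Γ(z+m)‖ ≤ Γ(Re z)/Γ(Re z + m)` for `Re z > 0`. By the functional equation, raising `m`
by one divides the left side by `‖z + m‖` and the right side by `Re z + m ≤ ‖z + m‖`.
-/

open Complex

-- At `s = 0` both sides vanish: `Γ(0) = 0` and `x / 0 = 0`.
theorem Complex.Gamma_eq_Gamma_add_one_div (s : ℂ) : Gamma s = Gamma (s + 1) / s := by
  rcases eq_or_ne s 0 with rfl | hs
  · simp [Gamma_zero]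
  · rw [Gamma_add_one s hs, mul_div_cancel_left₀ _ hs]

theorem Complex.Gamma_eq_Gamma_add_two_div (s : ℂ) : Gamma s = Gamma (s + 2) / (s * (s + 1)) := by
  rw [Gamma_eq_Gamma_add_one_div s, Gamma_eq_Gamma_add_one_div (s + 1), add_assoc,
    one_add_one_eq_two, div_div, mul_comm]

theorem Complex.norm_Gamma_div_Gamma_add_nat_le {z : ℂ} (hz : 0 < z.re) (m : ℕ) :
    ‖Gamma z / Gamma (z + m)‖ ≤ Real.Gamma z.re / Real.Gamma (z.re + m) := by
  induction m with
  | zero => simp [div_self, Gamma_ne_zero_of_re_pos hz, (Real.Gamma_pos_of_pos hz).ne']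
  | succ m ih =>
    have hre : 0 < z.re + m := by positivity
    have hzm : z + m ≠ 0 := ne_zero_of_re_pos (by simpa using hre)
    calc ‖Gamma z / Gamma (z + (m + 1 : ℕ))‖ = ‖Gamma z / Gamma (z + m)‖ / ‖z + m‖ := by
          rw [Nat.cast_succ, ← add_assoc, Gamma_add_one _ hzm, norm_div, norm_div, norm_mul,
            div_div, mul_comm]
      _ ≤ Real.Gamma z.re / Real.Gamma (z.re + m) / (z.re + m) := by
          gcongr
          simpa using re_le_norm (z + m)
      _ = Real.Gamma z.re / Real.Gamma (z.re + (m + 1 : ℕ)) := by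
          rw [Nat.cast_succ, ← add_assoc, Real.Gamma_add_one hre.ne', div_div, mul_comm]

theorem stmt4_general (n : ℕ) (hn : 2 ≤ n) (s : ℂ) (hs : -1 < s.re) :
    ‖Complex.Gamma s * Complex.Gamma (n : ℂ) / Complex.Gamma (s + (n : ℂ))‖ ≤
      Real.Gamma (s.re + 2) * Real.Gamma (n : ℝ) /
        (‖s * (s + 1)‖ * Real.Gamma (s.re + n)) := by
  obtain ⟨m, rfl⟩ : ∃ m, n = m + 2 := ⟨n - 2, by omega⟩
  have hsn : s + ((m + 2 : ℕ) : ℂ) = s + 2 + m := by push_cast; ring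
  have hσn : s.re + ((m + 2 : ℕ) : ℝ) = (s + 2).re + m := by
    rw [add_re, re_ofNat]; push_cast; ring
  have hΓn : 0 ≤ Real.Gamma (m + 2 : ℕ) := Real.Gamma_nonneg_of_nonneg (Nat.cast_nonneg _)
  calc ‖Gamma s * Gamma ((m + 2 : ℕ) : ℂ) / Gamma (s + ((m + 2 : ℕ) : ℂ))‖
      = ‖Gamma (s + 2) / Gamma (s + 2 + m)‖ * Real.Gamma (m + 2 : ℕ) / ‖s * (s + 1)‖ := by
        rw [hsn, Gamma_eq_Gamma_add_two_div s, ← Complex.ofReal_natCast, Complex.Gamma_ofReal,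
          norm_div, norm_mul, norm_div, norm_div, Complex.norm_real, Real.norm_of_nonneg hΓn]
        ring
    _ ≤ Real.Gamma (s + 2).re / Real.Gamma ((s + 2).re + m) * Real.Gamma (m + 2 : ℕ)
          / ‖s * (s + 1)‖ := by
        gcongr
        exact norm_Gamma_div_Gamma_add_nat_le (by rw [add_re, re_ofNat]; linarith) m
    _ = Real.Gamma (s.re + 2) * Real.Gamma (m + 2 : ℕ) /
          (‖s * (s + 1)‖ * Real.Gamma (s.re + (m + 2 : ℕ))) := by
        rw [hσn, add_re, re_ofNat]
        ring

/--
For every integer `n ≥ 2` and every complex number `s = σ + iτ` with `σ > -1` and `s ≠ 0`,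
one has `|Γ(s)Γ(n)/Γ(s+n)| ≤ Γ(σ+2)Γ(n)/(|s(s+1)| · Γ(σ+n))`, where `Γ` denotes the Gamma
function (complex on the left, real and positive on the right).
-/
theorem stmt4 (n : ℕ) (hn : 2 ≤ n) (s : ℂ) (hs : -1 < s.re) (hs0 : s ≠ 0) :
    ‖Complex.Gamma s * Complex.Gamma (n : ℂ) / Complex.Gamma (s + (n : ℂ))‖ ≤
      Real.Gamma (s.re + 2) * Real.Gamma (n : ℝ) /
        (‖s * (s + 1)‖ * Real.Gamma (s.re + n)) :=
  stmt4_general n hn s hs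
end

section
/- Let μ be a σ-finite Borel measure on the interval (0,1) whose Mellin transform satisfies ∫₀¹ x^{s-1} dμ(x) = 1/(ψ(s) - ψ(1)) for every real s > 1. Then for every integer n ≥ 2, ∫₀¹ (1 - (1-x)^{n-1}) dμ(x) = Σ_{j=1}^{n-1} (-1)^{j-1} · C(n-1, j) / h_j, where h_j = Σ_{i=1}^j 1/i and C(n-1,j) is the binomial coefficient. -/
open MeasureTheory

/-- The digamma function on the reals: `ψ(x) = Γ'(x)/Γ(x)`. -/
noncomputable def digamma (x : ℝ) : ℝ := deriv Real.Gamma x / Real.Gamma x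

/-- The `m`-th harmonic number `h_m = ∑_{i=1}^m 1/i`, with `h_0 = 0`. -/
noncomputable def harm (m : ℕ) : ℝ := ∑ i ∈ Finset.range m, (1 : ℝ) / (i + 1)

/-! Evaluating the Mellin hypothesis at `s = j + 1` and using `ψ(j + 1) - ψ(1) = h_j` gives the
moments `∫ x^j dμ = 1 / h_j` for `j ≥ 1`; these are nonzero, so `x^j` is integrable. Since
`1 - (1 - x)^m` is a polynomial without constant term, integrating its binomial expansion
termwise gives the alternating sum. -/

theorem one_sub_one_sub_pow {R : Type*} [CommRing R] (m : ℕ) (x : R) :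
    1 - (1 - x) ^ m = ∑ j ∈ Finset.Icc 1 m, (-1) ^ (j - 1) * (m.choose j : R) * x ^ j := by
  rw [sub_eq_neg_add (1 : R) x, add_pow, Finset.sum_range_succ',
    ← Finset.Ico_add_one_right_eq_Icc, Finset.sum_Ico_eq_sum_range, Nat.add_sub_cancel]
  simp only [one_pow, mul_one, pow_zero, Nat.choose_zero_right, Nat.cast_one, sub_add_cancel_right,
    ← Finset.sum_neg_distrib, add_comm 1, Nat.add_sub_cancel, neg_pow x, pow_succ (-1 : R)]
  refine Finset.sum_congr rfl fun k _ => ?_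
  ring

theorem Real.deriv_Gamma_add_one {x : ℝ} (hx : ∀ m : ℕ, x ≠ -m) :
    deriv Gamma (x + 1) = Gamma x + x * deriv Gamma x := by
  have hx0 : x ≠ 0 := by simpa using hx 0
  have hshift : (fun y => Gamma (y + 1)) =ᶠ[nhds x] fun y => y * Gamma y := by
    filter_upwards [eventually_ne_nhds hx0] with y hy using Gamma_add_one hy
  rw [← deriv_comp_add_const, hshift.deriv_eq,
    deriv_fun_mul differentiableAt_fun_id (differentiableAt_Gamma hx)]
  simp

theorem digamma_add_one {x : ℝ} (hx : ∀ m : ℕ, x ≠ -m) :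
    digamma (x + 1) = digamma x + 1 / x := by
  have hx0 : x ≠ 0 := by simpa using hx 0
  have hΓ : Real.Gamma x ≠ 0 := Real.Gamma_ne_zero hx
  rw [digamma, digamma, Real.Gamma_add_one hx0, Real.deriv_Gamma_add_one hx]
  field_simp
  ring

theorem harm_succ (m : ℕ) : harm (m + 1) = harm m + 1 / (m + 1) :=
  Finset.sum_range_succ _ _

theorem harm_pos {j : ℕ} (hj : j ≠ 0) : 0 < harm j :=
  Finset.sum_pos (fun i _ => by positivity) ⟨0, Finset.mem_range.mpr (Nat.pos_of_ne_zero hj)⟩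

theorem digamma_natCast_add_one (m : ℕ) : digamma (m + 1) = digamma 1 + harm m := by
  induction m with
  | zero => simp [harm]
  | succ k ih =>
    have hk : ∀ m : ℕ, (k + 1 : ℝ) ≠ -m := fun m h => by
      linarith [m.cast_nonneg (α := ℝ)]
    push_cast
    rw [digamma_add_one hk, ih, harm_succ]
    ring

theorem integral_pow_of_mellin {ν : Measure ℝ}
    (hMellin : ∀ s : ℝ, 1 < s → ∫ x, x ^ (s - 1) ∂ν = 1 / (digamma s - digamma 1))
    {j : ℕ} (hj : j ≠ 0) : ∫ x, x ^ j ∂ν = 1 / harm j := by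
  have hs : (1 : ℝ) < j + 1 := by norm_cast; omega
  simpa [digamma_natCast_add_one, Real.rpow_natCast] using hMellin (j + 1) hs

theorem integrable_pow_of_mellin {ν : Measure ℝ}
    (hMellin : ∀ s : ℝ, 1 < s → ∫ x, x ^ (s - 1) ∂ν = 1 / (digamma s - digamma 1))
    {j : ℕ} (hj : j ≠ 0) : Integrable (fun x => x ^ j) ν :=
  .of_integral_ne_zero <| by
    rw [integral_pow_of_mellin hMellin hj]
    exact (one_div_pos.mpr (harm_pos hj)).ne'

theorem integral_one_sub_one_sub_pow_of_mellin {ν : Measure ℝ}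
    (hMellin : ∀ s : ℝ, 1 < s → ∫ x, x ^ (s - 1) ∂ν = 1 / (digamma s - digamma 1))
    (m : ℕ) :
    ∫ x, (1 - (1 - x) ^ m) ∂ν =
      ∑ j ∈ Finset.Icc 1 m, (-1 : ℝ) ^ (j - 1) * (m.choose j) / harm j := by
  have hj : ∀ j ∈ Finset.Icc 1 m, j ≠ 0 := fun j hj =>
    Nat.one_le_iff_ne_zero.mp (Finset.mem_Icc.mp hj).1
  simp_rw [one_sub_one_sub_pow]
  rw [integral_finsetSum _ fun j hj' => (integrable_pow_of_mellin hMellin (hj j hj')).const_mul _]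
  refine Finset.sum_congr rfl fun j hj' => ?_
  rw [integral_const_mul, integral_pow_of_mellin hMellin (hj j hj'), mul_one_div]

theorem stmt11_general (μ : Measure ℝ)
    (hMellin : ∀ s : ℝ, 1 < s →
      ∫ x in Set.Ioo (0:ℝ) 1, x ^ (s - 1) ∂μ = 1 / (digamma s - digamma 1))
    (n : ℕ) :
    ∫ x in Set.Ioo (0:ℝ) 1, (1 - (1 - x) ^ (n - 1)) ∂μ =
      ∑ j ∈ Finset.Icc 1 (n - 1), (-1 : ℝ) ^ (j - 1) * ((n - 1).choose j) / harm j :=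
  integral_one_sub_one_sub_pow_of_mellin hMellin (n - 1)

/--
Let `μ` be a σ-finite Borel measure on the interval `(0,1)` whose Mellin transform satisfies
`∫₀¹ x^{s-1} dμ(x) = 1/(ψ(s) - ψ(1))` for every real `s > 1`. Then for every integer `n ≥ 2`,
`∫₀¹ (1 - (1-x)^{n-1}) dμ(x) = Σ_{j=1}^{n-1} (-1)^{j-1} · C(n-1, j) / h_j`,
where `h_j = Σ_{i=1}^j 1/i` and `C(n-1,j)` is the binomial coefficient.
-/
theorem stmt11 (μ : Measure ℝ) [SigmaFinite μ]
    (hsupp : μ (Set.Ioo (0:ℝ) 1)ᶜ = 0)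
    (hMellin : ∀ s : ℝ, 1 < s →
      ∫ x in Set.Ioo (0:ℝ) 1, x ^ (s - 1) ∂μ = 1 / (digamma s - digamma 1))
    (n : ℕ) (hn : 2 ≤ n) :
    ∫ x in Set.Ioo (0:ℝ) 1, (1 - (1 - x) ^ (n - 1)) ∂μ =
      ∑ j ∈ Finset.Icc 1 (n - 1), (-1 : ℝ) ^ (j - 1) * ((n - 1).choose j) / harm j :=
  stmt11_general μ hMellin n
end
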